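/- arXiv:2605.15353 — 2 statements merged into one kernel-verified Lean document; each statement's English description precedes it below -/
import Mathlib

section
/- Let n ≥ 2, let θ : Fin n → ℝ and p : Fin n × Fin n → [0,1]. Under the Bernoulli-Plackett-Luce model, the expectation of the edge indicator a_{ij} (for distinct i, j) equals p_{ij} · exp(θ_i)/(exp(θ_i)+exp(θ_j)). -/
open Finset

/-- The Plackett-Luce probability of a permutation `π` of `{1,…,n}` with logits `θ`. -/
noncomputable def plackettLuce {n : ℕ} (θ : Fin n → ℝ) (π : Equiv.Perm (Fin n)) : ℝ :=
  ∏ k : Fin n,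
    Real.exp (θ (π k)) / ∑ u ∈ Finset.univ.filter (fun u => k ≤ u), Real.exp (θ (π u))

/-- Joint probability of a `(permutation, edge mask)` sample under the
Bernoulli-Plackett-Luce model: the permutation is Plackett-Luce distributed and,
independently, each mask entry `b i j` is Bernoulli with parameter `p i j`. -/
noncomputable def bplProb {n : ℕ} (θ : Fin n → ℝ) (p : Fin n → Fin n → ℝ)
    (ω : Equiv.Perm (Fin n) × (Fin n → Fin n → Bool)) : ℝ :=
  plackettLuce θ ω.1 * ∏ i : Fin n, ∏ j : Fin n, (if ω.2 i j then p i j else 1 - p i j)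

/-- The edge indicator `a_{ij} = b_{ij} · 1[π⁻¹(i) < π⁻¹(j)]`. -/
def bplEdge {n : ℕ} (i j : Fin n)
    (ω : Equiv.Perm (Fin n) × (Fin n → Fin n → Bool)) : ℝ :=
  if ω.2 i j ∧ ω.1.symm i < ω.1.symm j then 1 else 0

/-! Conditioning a Plackett-Luce ranking on its first item `p` (chosen with probability
`exp θ p / ∑ exp θ`) leaves a Plackett-Luce ranking of the remaining items. Hence, by induction
on `n`, the probability `r` that `i` precedes `j` satisfies the first-step equation
`r = P(first = i) + P(first ∉ {i, j}) · r`, whose solution is `exp θ i / (exp θ i + exp θ j)`.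
The Bernoulli mask is independent of the ranking, so the expectation of `a_{ij}` factors as
`P(b_{ij} = 1) · r = p i j · r`. -/

open Equiv Equiv.Perm

lemma sum_exp_pos {ι : Type*} [Fintype ι] [Nonempty ι] (θ : ι → ℝ) :
    0 < ∑ u, Real.exp (θ u) :=
  Finset.sum_pos (fun _ _ => Real.exp_pos _) univ_nonempty

lemma sum_div_mul_ite_eq {ι : Type*} [Fintype ι] [DecidableEq ι] (w : ι → ℝ) {i j : ι}
    (hij : i ≠ j) (hT : ∑ k, w k ≠ 0) (hw : w i + w j ≠ 0) :
    ∑ k, w k / (∑ l, w l) * (if k = i then 1 else if k = j then 0 else w i / (w i + w j)) =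
      w i / (w i + w j) := by
  set r := w i / (w i + w j)
  have split (k : ι) : (if k = i then 1 else if k = j then 0 else r) =
      r + (if k = i then 1 - r else 0) + (if k = j then -r else 0) := by
    by_cases hi : k = i
    · simp [hi, hij]
    · by_cases hj : k = j <;> simp [hi, hj, hij.symm]
  simp only [split, mul_add, sum_add_distrib, mul_ite, mul_zero, Fintype.sum_ite_eq',
    ← sum_mul, ← sum_div, div_self hT, one_mul]
  have hr : w i * (1 - r) + w j * -r = 0 := by linear_combination -(div_mul_cancel₀ (w i) hw)
  rw [div_mul_eq_mul_div, div_mul_eq_mul_div, add_assoc, ← add_div, hr, zero_div, add_zero]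

lemma sum_prod_mul_apply_of_sum_eq_one {ι κ : Type*} [Fintype ι] [DecidableEq ι] [Fintype κ]
    (w : ι → κ → ℝ) (hw : ∀ a, ∑ y, w a y = 1) (k : ι) (g : κ → ℝ) :
    ∑ x : ι → κ, (∏ a, w a (x a)) * g (x k) = ∑ y, w k y * g y := by
  have factor (x : ι → κ) :
      (∏ a, w a (x a)) * g (x k) = ∏ a, w a (x a) * (if a = k then g (x a) else 1) := by
    rw [prod_mul_distrib, Fintype.prod_ite_eq']
  simp only [factor]
  rw [← Fintype.prod_sum fun a y => w a y * if a = k then g y else 1,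
    Fintype.prod_eq_single k fun a ha => by simp [ha, hw]]
  simp

lemma exists_swap_zero_succ_eq {n : ℕ} {p x : Fin (n + 1)} (h : x ≠ p) :
    ∃ k : Fin n, swap 0 p k.succ = x := by
  obtain ⟨k, hk⟩ := Fin.exists_succ_eq.mpr fun h0 =>
    h (by rwa [swap_apply_eq_iff, swap_apply_left] at h0)
  exact ⟨k, by rw [hk, swap_apply_self]⟩

lemma decomposeFin_symm_symm_apply_self {n : ℕ} (p : Fin (n + 1)) (e : Perm (Fin n)) :
    (decomposeFin.symm (p, e)).symm p = 0 := by
  rw [Equiv.symm_apply_eq, decomposeFin_symm_apply_zero]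

lemma decomposeFin_symm_symm_apply_of_swap_succ_eq {n : ℕ} {p x : Fin (n + 1)} {k : Fin n}
    (e : Perm (Fin n)) (h : swap 0 p k.succ = x) :
    (decomposeFin.symm (p, e)).symm x = (e.symm k).succ := by
  rw [Equiv.symm_apply_eq, decomposeFin_symm_apply_succ, e.apply_symm_apply, h]

/-- `decomposeFin.symm (p, e)` ranks `p` first and the other items in the order given by `e`,
read through `swap 0 p ∘ Fin.succ`. -/
lemma plackettLuce_decomposeFin_symm {n : ℕ} (θ : Fin (n + 1) → ℝ) (p : Fin (n + 1))
    (e : Perm (Fin n)) :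
    plackettLuce θ (decomposeFin.symm (p, e)) =
      Real.exp (θ p) / (∑ u, Real.exp (θ u)) * plackettLuce (θ ∘ swap 0 p ∘ Fin.succ) e := by
  unfold plackettLuce
  rw [Fin.prod_univ_succ, decomposeFin_symm_apply_zero,
    filter_true_of_mem fun u _ => Fin.zero_le u,
    Equiv.sum_comp _ fun u => Real.exp (θ u)]
  congr 1
  refine prod_congr rfl fun k _ => ?_
  rw [sum_filter, sum_filter, Fin.sum_univ_succ, if_neg (Fin.succ_pos k).not_ge]
  simp only [Fin.succ_le_succ_iff, decomposeFin_symm_apply_succ, zero_add, Function.comp_apply]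

lemma sum_plackettLuce {n : ℕ} (θ : Fin n → ℝ) : ∑ π, plackettLuce θ π = 1 := by
  induction n with
  | zero => simp [plackettLuce]
  | succ m ih =>
    rw [← Equiv.sum_comp decomposeFin.symm, Fintype.sum_prod_type]
    simp only [plackettLuce_decomposeFin_symm, ← mul_sum, ih, mul_one, ← sum_div]
    exact div_self (sum_exp_pos θ).ne'

theorem sum_plackettLuce_mul_ite_symm_lt {n : ℕ} (θ : Fin n → ℝ) {i j : Fin n} (hij : i ≠ j) :
    ∑ π, plackettLuce θ π * (if π.symm i < π.symm j then 1 else 0) =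
      Real.exp (θ i) / (Real.exp (θ i) + Real.exp (θ j)) := by
  induction n with
  | zero => exact i.elim0
  | succ m ih =>
    rw [← Equiv.sum_comp decomposeFin.symm, Fintype.sum_prod_type]
    have first (p : Fin (m + 1)) :
        ∑ e, plackettLuce θ (decomposeFin.symm (p, e)) *
          (if (decomposeFin.symm (p, e)).symm i < (decomposeFin.symm (p, e)).symm j
            then 1 else 0) =
        Real.exp (θ p) / (∑ u, Real.exp (θ u)) *
          (if p = i then 1
            else if p = j then 0 else Real.exp (θ i) / (Real.exp (θ i) + Real.exp (θ j))) := by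
      simp only [plackettLuce_decomposeFin_symm, mul_assoc, ← mul_sum]
      congr 1
      rcases eq_or_ne p i with rfl | hpi
      · obtain ⟨j', hj'⟩ := exists_swap_zero_succ_eq hij.symm
        simp only [decomposeFin_symm_symm_apply_self,
          decomposeFin_symm_symm_apply_of_swap_succ_eq _ hj', Fin.succ_pos, if_true, mul_one,
          sum_plackettLuce]
      rcases eq_or_ne p j with rfl | hpj
      · simp [decomposeFin_symm_symm_apply_self, hpi]
      obtain ⟨i', hi'⟩ := exists_swap_zero_succ_eq hpi.symm
      obtain ⟨j', hj'⟩ := exists_swap_zero_succ_eq hpj.symm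
      have hi'j' : i' ≠ j' := fun h => hij (hi'.symm.trans (h ▸ hj'))
      simp only [decomposeFin_symm_symm_apply_of_swap_succ_eq _ hi',
        decomposeFin_symm_symm_apply_of_swap_succ_eq _ hj', Fin.succ_lt_succ_iff, if_neg hpi,
        if_neg hpj, ih _ hi'j', Function.comp_apply, hi', hj']
    simp only [first]
    exact sum_div_mul_ite_eq _ hij (sum_exp_pos θ).ne' (by positivity)

lemma sum_prod_bernoulli_mul_ite {α β : Type*} [Fintype α] [DecidableEq α] [Fintype β]
    [DecidableEq β] (p : α → β → ℝ) (i : α) (j : β) :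
    ∑ b : α → β → Bool, (∏ a, ∏ c, if b a c then p a c else 1 - p a c) *
      (if b i j then 1 else 0) = p i j := by
  have hbool (q : ℝ) : ∑ t : Bool, (if t then q else 1 - q) = 1 := by
    rw [Fintype.sum_bool]; simp
  have hrow (a : α) : ∑ h : β → Bool, ∏ c, (if h c then p a c else 1 - p a c) = 1 := by
    rw [← Fintype.prod_sum fun c (t : Bool) => if t then p a c else 1 - p a c]
    exact Fintype.prod_eq_one _ fun c => hbool (p a c)
  rw [sum_prod_mul_apply_of_sum_eq_one _ hrow i fun h => if h j then 1 else 0,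
    sum_prod_mul_apply_of_sum_eq_one _ (fun c => hbool (p i c)) j fun t => if t then 1 else 0]
  simp

theorem bpl_expected_edge_general {n : ℕ} (θ : Fin n → ℝ)
    (p : Fin n → Fin n → ℝ)
    (i j : Fin n) (hij : i ≠ j) :
    ∑ ω : Equiv.Perm (Fin n) × (Fin n → Fin n → Bool),
        bplProb θ p ω * bplEdge i j ω
      = p i j * (Real.exp (θ i) / (Real.exp (θ i) + Real.exp (θ j))) := by
  have factor (ω : Perm (Fin n) × (Fin n → Fin n → Bool)) : bplProb θ p ω * bplEdge i j ω =
      (plackettLuce θ ω.1 * if ω.1.symm i < ω.1.symm j then 1 else 0) *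
        ((∏ a, ∏ c, if ω.2 a c then p a c else 1 - p a c) * if ω.2 i j then 1 else 0) := by
    simp only [bplProb, bplEdge, ite_and]
    split_ifs <;> ring
  rw [← sum_plackettLuce_mul_ite_symm_lt θ hij, ← sum_prod_bernoulli_mul_ite p i j, mul_comm,
    Fintype.sum_mul_sum]
  simp only [Fintype.sum_prod_type, factor]

/-- Under the Bernoulli-Plackett-Luce model, the expectation of the edge
indicator `a_{ij}` (for distinct `i j`) equals
`p i j · exp θ i / (exp θ i + exp θ j)`. -/
theorem bpl_expected_edge {n : ℕ} (hn : 2 ≤ n) (θ : Fin n → ℝ)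
    (p : Fin n → Fin n → ℝ) (hp : ∀ a b, 0 ≤ p a b ∧ p a b ≤ 1)
    (i j : Fin n) (hij : i ≠ j) :
    ∑ ω : Equiv.Perm (Fin n) × (Fin n → Fin n → Bool),
        bplProb θ p ω * bplEdge i j ω
      = p i j * (Real.exp (θ i) / (Real.exp (θ i) + Real.exp (θ j))) :=
  bpl_expected_edge_general θ p i j hij
end

section
/- Let n ≥ 3, let θ : Fin n → ℝ and p : Fin n × Fin n → [0,1], and consider the Bernoulli-Plackett-Luce model with edge indicators a_{ij}. Fix an index j, real weights w_{ij} and real values x_i for i ≠ j. Then the variance (over the randomness of the Bernoulli-Plackett-Luce model) of the random variable Σ_{i ≠ j} a_{ij} w_{ij} x_i equals Σ_{i ≠ j} (w_{ij} x_i)² · E[a_{ij}](1 − E[a_{ij}]) + Σ_{i ≠ j} Σ_{k ≠ j, k ≠ i} (E[a_{ij}] w_{ij} x_i)(E[a_{kj}] w_{kj} x_k) · exp(θ_j)/(exp(θ_i)+exp(θ_j)+exp(θ_k)), where E[a_{ij}] = p_{ij} · exp(θ_i)/(exp(θ_i)+exp(θ_j)). -/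
open Finset

/-- The expected edge probability `E[a_{ij}] = p_{ij} · e^{θ_i}/(e^{θ_i}+e^{θ_j})`
under the Bernoulli-Plackett-Luce model. -/
noncomputable def bplEdgeExp {n : ℕ} (θ : Fin n → ℝ) (p : Fin n → Fin n → ℝ)
    (i j : Fin n) : ℝ :=
  p i j * (Real.exp (θ i) / (Real.exp (θ i) + Real.exp (θ j)))

lemma pl_rec {n : ℕ} (θ : Fin (n+1) → ℝ) (p : Fin (n+1)) (e : Equiv.Perm (Fin n)) :
    plackettLuce θ (Equiv.Perm.decomposeFin.symm (p, e))
      = Real.exp (θ p) / (∑ v, Real.exp (θ v))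
        * plackettLuce (fun m => θ (Equiv.swap 0 p m.succ)) e := by
  set π := Equiv.Perm.decomposeFin.symm (p, e) with hπ
  unfold plackettLuce
  rw [Fin.prod_univ_succ]
  congr 1
  · have h1 : Finset.univ.filter (fun u : Fin (n+1) => (0:Fin (n+1)) ≤ u) = Finset.univ := by
      simp [Finset.filter_true_of_mem, Fin.zero_le]
    rw [h1]
    rw [Equiv.Perm.decomposeFin_symm_apply_zero]
    congr 1
    exact Equiv.sum_comp π (fun v => Real.exp (θ v))
  · apply Finset.prod_congr rfl
    intro m _
    rw [Equiv.Perm.decomposeFin_symm_apply_succ]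
    congr 1
    rw [Finset.sum_filter, Finset.sum_filter, Fin.sum_univ_succ]
    have h0 : ¬ (m.succ ≤ (0 : Fin (n+1))) := by
      simp [Fin.le_def]
    rw [if_neg h0, zero_add]
    apply Finset.sum_congr rfl
    intro u _
    simp only [Fin.succ_le_succ_iff, hπ, Equiv.Perm.decomposeFin_symm_apply_succ]

lemma pl_sum_one : ∀ {n : ℕ} (θ : Fin n → ℝ), ∑ π : Equiv.Perm (Fin n), plackettLuce θ π = 1 := by
  intro n
  induction n with
  | zero => intro θ; simp [plackettLuce]
  | succ n ih =>
    intro θ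
    have hW : 0 < ∑ v : Fin (n+1), Real.exp (θ v) :=
      Finset.sum_pos (fun v _ => Real.exp_pos _) ⟨0, Finset.mem_univ 0⟩
    rw [← Equiv.sum_comp (Equiv.Perm.decomposeFin.symm) (plackettLuce θ),
      Fintype.sum_prod_type]
    simp only [pl_rec, ← Finset.mul_sum]
    simp only [ih, mul_one]
    rw [← Finset.sum_div, div_self hW.ne']

lemma swap_zero_ne {n : ℕ} {p i : Fin (n+1)} (h : i ≠ p) : Equiv.swap 0 p i ≠ 0 := by
  intro h0
  apply h
  have := congrArg (Equiv.swap 0 p) h0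
  rwa [Equiv.swap_apply_self, Equiv.swap_apply_left] at this

def dsc {n : ℕ} (p i : Fin (n+1)) (h : i ≠ p) : Fin n :=
  (Equiv.swap 0 p i).pred (swap_zero_ne h)

lemma dsc_succ {n : ℕ} {p i : Fin (n+1)} (h : i ≠ p) :
    (dsc p i h).succ = Equiv.swap 0 p i := Fin.succ_pred _ _

lemma symm_eq {n : ℕ} (p : Fin (n+1)) (e : Equiv.Perm (Fin n)) {i : Fin (n+1)} (h : i ≠ p) :
    (Equiv.Perm.decomposeFin.symm (p, e)).symm i = (e.symm (dsc p i h)).succ := by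
  rw [Equiv.symm_apply_eq, Equiv.Perm.decomposeFin_symm_apply_succ, Equiv.apply_symm_apply,
    dsc_succ, Equiv.swap_apply_self]

lemma symm_p {n : ℕ} (p : Fin (n+1)) (e : Equiv.Perm (Fin n)) :
    (Equiv.Perm.decomposeFin.symm (p, e)).symm p = 0 := by
  rw [Equiv.symm_apply_eq, Equiv.Perm.decomposeFin_symm_apply_zero]

lemma theta_dsc {n : ℕ} (θ : Fin (n+1) → ℝ) {p i : Fin (n+1)} (h : i ≠ p) :
    θ (Equiv.swap 0 p (dsc p i h).succ) = θ i := by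
  rw [dsc_succ, Equiv.swap_apply_self]

lemma dsc_ne {n : ℕ} {p i j : Fin (n+1)} (hi : i ≠ p) (hj : j ≠ p) (hij : i ≠ j) :
    dsc p i hi ≠ dsc p j hj := by
  intro h
  apply hij
  have := congrArg Fin.succ h
  rw [dsc_succ, dsc_succ] at this
  exact (Equiv.swap 0 p).injective this

lemma pl_pair : ∀ {n : ℕ} (θ : Fin n → ℝ) (i j : Fin n), i ≠ j →
    ∑ π : Equiv.Perm (Fin n), plackettLuce θ π * (if π.symm i < π.symm j then 1 else 0)
      = Real.exp (θ i) / (Real.exp (θ i) + Real.exp (θ j)) := by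
  intro n
  induction n with
  | zero => intro θ i j _; exact absurd i.2 (by omega)
  | succ n ih =>
    intro θ i j hij
    have hEiEj : 0 < Real.exp (θ i) + Real.exp (θ j) := by positivity
    have hW : 0 < ∑ v : Fin (n+1), Real.exp (θ v) :=
      Finset.sum_pos (fun v _ => Real.exp_pos _) ⟨0, Finset.mem_univ 0⟩
    set r := Real.exp (θ i) / (Real.exp (θ i) + Real.exp (θ j)) with hr
    rw [← Equiv.sum_comp (Equiv.Perm.decomposeFin.symm)
      (fun π : Equiv.Perm (Fin (n+1)) =>
        plackettLuce θ π * (if π.symm i < π.symm j then 1 else 0)),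
      Fintype.sum_prod_type]
    have inner : ∀ p : Fin (n+1),
        (∑ e : Equiv.Perm (Fin n),
          plackettLuce θ (Equiv.Perm.decomposeFin.symm (p, e))
            * (if (Equiv.Perm.decomposeFin.symm (p, e)).symm i
                  < (Equiv.Perm.decomposeFin.symm (p, e)).symm j then 1 else 0))
          = Real.exp (θ p) / (∑ v : Fin (n+1), Real.exp (θ v))
            * (if p = i then 1 else if p = j then 0 else r) := by
      intro p
      simp only [pl_rec, mul_assoc, ← Finset.mul_sum]
      congr 1
      by_cases hpi : p = i
      · subst hpi
        rw [if_pos rfl]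
        have hjp : j ≠ p := fun h => hij h.symm
        have : ∀ e : Equiv.Perm (Fin n),
            ((Equiv.Perm.decomposeFin.symm (p, e)).symm p
              < (Equiv.Perm.decomposeFin.symm (p, e)).symm j) := by
          intro e
          rw [symm_p, symm_eq p e hjp]
          exact Fin.succ_pos _
        simp only [this, if_true, ite_true, mul_one]
        exact pl_sum_one _
      · by_cases hpj : p = j
        · subst hpj
          rw [if_neg hpi, if_pos rfl]
          have hip : i ≠ p := hij
          have : ∀ e : Equiv.Perm (Fin n),
              ¬((Equiv.Perm.decomposeFin.symm (p, e)).symm i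
                < (Equiv.Perm.decomposeFin.symm (p, e)).symm p) := by
            intro e
            rw [symm_p, symm_eq p e hip]
            exact (Fin.succ_pos _).not_gt
          simp only [this, ite_false, if_false, mul_zero]
          exact Finset.sum_const_zero
        · rw [if_neg hpi, if_neg hpj]
          have hip : i ≠ p := fun h => hpi h.symm
          have hjp : j ≠ p := fun h => hpj h.symm
          have hcond : ∀ e : Equiv.Perm (Fin n),
              ((Equiv.Perm.decomposeFin.symm (p, e)).symm i
                < (Equiv.Perm.decomposeFin.symm (p, e)).symm j)
              ↔ (e.symm (dsc p i hip) < e.symm (dsc p j hjp)) := by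
            intro e
            rw [symm_eq p e hip, symm_eq p e hjp, Fin.succ_lt_succ_iff]
          have := ih (fun m => θ (Equiv.swap 0 p m.succ)) (dsc p i hip) (dsc p j hjp)
            (dsc_ne hip hjp hij)
          simp only [theta_dsc] at this
          rw [← hr] at this
          rw [← this]
          apply Finset.sum_congr rfl
          intro e _
          congr 1
          simp only [hcond e]
    rw [Finset.sum_congr rfl (fun p _ => inner p)]
    have key : (∑ p : Fin (n+1), Real.exp (θ p) * (if p = i then 1 else if p = j then 0 else r))
        = r * (∑ v : Fin (n+1), Real.exp (θ v)) := by
      rw [Finset.mul_sum, ← sub_eq_zero, ← Finset.sum_sub_distrib]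
      rw [Finset.sum_eq_add_of_mem i j (Finset.mem_univ i) (Finset.mem_univ j) hij ?_]
      · rw [if_pos rfl, if_neg hij.symm, if_pos rfl]
        rw [hr]
        field_simp
        ring
      · intro k _ hk
        rw [if_neg hk.1, if_neg hk.2, mul_comm, sub_self]
    calc ∑ p : Fin (n+1), Real.exp (θ p) / (∑ v : Fin (n+1), Real.exp (θ v))
          * (if p = i then 1 else if p = j then 0 else r)
        = (∑ p : Fin (n+1), Real.exp (θ p) * (if p = i then 1 else if p = j then 0 else r))
            / (∑ v : Fin (n+1), Real.exp (θ v)) := by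
          rw [Finset.sum_div]; apply Finset.sum_congr rfl; intro p _; ring
      _ = r := by rw [key, mul_div_assoc, div_self hW.ne', mul_one]

noncomputable def T2v (a b c : ℝ) : ℝ :=
  Real.exp a * Real.exp c / (Real.exp a + Real.exp b + Real.exp c)
    * (1 / (Real.exp c + Real.exp b) + 1 / (Real.exp a + Real.exp b))

lemma pl_triple : ∀ {n : ℕ} (θ : Fin n → ℝ) (i j k : Fin n), i ≠ j → k ≠ j → k ≠ i →
    ∑ π : Equiv.Perm (Fin n), plackettLuce θ π
        * (if π.symm i < π.symm j then 1 else 0)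
        * (if π.symm k < π.symm j then 1 else 0)
      = T2v (θ i) (θ j) (θ k) := by
  intro n
  induction n with
  | zero => intro θ i j k _ _ _; exact absurd i.2 (by omega)
  | succ n ih =>
    intro θ i j k hij hkj hki
    have hW : 0 < ∑ v : Fin (n+1), Real.exp (θ v) :=
      Finset.sum_pos (fun v _ => Real.exp_pos _) ⟨0, Finset.mem_univ 0⟩
    set t := T2v (θ i) (θ j) (θ k) with ht
    rw [← Equiv.sum_comp (Equiv.Perm.decomposeFin.symm)
      (fun π : Equiv.Perm (Fin (n+1)) =>
        plackettLuce θ π * (if π.symm i < π.symm j then 1 else 0)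
          * (if π.symm k < π.symm j then 1 else 0)),
      Fintype.sum_prod_type]
    have inner : ∀ p : Fin (n+1),
        (∑ e : Equiv.Perm (Fin n),
          plackettLuce θ (Equiv.Perm.decomposeFin.symm (p, e))
            * (if (Equiv.Perm.decomposeFin.symm (p, e)).symm i
                  < (Equiv.Perm.decomposeFin.symm (p, e)).symm j then 1 else 0)
            * (if (Equiv.Perm.decomposeFin.symm (p, e)).symm k
                  < (Equiv.Perm.decomposeFin.symm (p, e)).symm j then 1 else 0))
          = Real.exp (θ p) / (∑ v : Fin (n+1), Real.exp (θ v))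
            * (if p = i then Real.exp (θ k) / (Real.exp (θ k) + Real.exp (θ j))
               else if p = j then 0
               else if p = k then Real.exp (θ i) / (Real.exp (θ i) + Real.exp (θ j))
               else t) := by
      intro p
      simp only [pl_rec, mul_assoc, ← Finset.mul_sum]
      congr 1
      by_cases hpi : p = i
      · subst hpi
        rw [if_pos rfl]
        have hjp : j ≠ p := fun h => hij h.symm
        have hkp : k ≠ p := hki
        have h1 : ∀ e : Equiv.Perm (Fin n),
            ((Equiv.Perm.decomposeFin.symm (p, e)).symm p
              < (Equiv.Perm.decomposeFin.symm (p, e)).symm j) := by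
          intro e; rw [symm_p, symm_eq p e hjp]; exact Fin.succ_pos _
        have h2 : ∀ e : Equiv.Perm (Fin n),
            ((Equiv.Perm.decomposeFin.symm (p, e)).symm k
              < (Equiv.Perm.decomposeFin.symm (p, e)).symm j)
            ↔ (e.symm (dsc p k hkp) < e.symm (dsc p j hjp)) := by
          intro e; rw [symm_eq p e hkp, symm_eq p e hjp, Fin.succ_lt_succ_iff]
        have := pl_pair (fun m => θ (Equiv.swap 0 p m.succ)) (dsc p k hkp) (dsc p j hjp)
          (dsc_ne hkp hjp (fun h => hkj h))
        simp only [theta_dsc] at this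
        rw [← this]
        apply Finset.sum_congr rfl
        intro e _
        simp only [h1 e, if_true, ite_true, one_mul, h2 e, mul_one]
      · by_cases hpj : p = j
        · subst hpj
          rw [if_neg hpi, if_pos rfl]
          have hip : i ≠ p := hij
          have h1 : ∀ e : Equiv.Perm (Fin n),
              ¬((Equiv.Perm.decomposeFin.symm (p, e)).symm i
                < (Equiv.Perm.decomposeFin.symm (p, e)).symm p) := by
            intro e; rw [symm_p, symm_eq p e hip]; exact (Fin.succ_pos _).not_gt
          simp only [h1, ite_false, if_false, zero_mul, mul_zero, Finset.sum_const_zero]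
        · by_cases hpk : p = k
          · subst hpk
            rw [if_neg hpi, if_neg hpj, if_pos rfl]
            have hjp : j ≠ p := fun h => hpj h.symm
            have hip : i ≠ p := fun h => hpi h.symm
            have h2 : ∀ e : Equiv.Perm (Fin n),
                ((Equiv.Perm.decomposeFin.symm (p, e)).symm p
                  < (Equiv.Perm.decomposeFin.symm (p, e)).symm j) := by
              intro e; rw [symm_p, symm_eq p e hjp]; exact Fin.succ_pos _
            have h1 : ∀ e : Equiv.Perm (Fin n),
                ((Equiv.Perm.decomposeFin.symm (p, e)).symm i
                  < (Equiv.Perm.decomposeFin.symm (p, e)).symm j)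
                ↔ (e.symm (dsc p i hip) < e.symm (dsc p j hjp)) := by
              intro e; rw [symm_eq p e hip, symm_eq p e hjp, Fin.succ_lt_succ_iff]
            have := pl_pair (fun m => θ (Equiv.swap 0 p m.succ)) (dsc p i hip) (dsc p j hjp)
              (dsc_ne hip hjp hij)
            simp only [theta_dsc] at this
            rw [← this]
            apply Finset.sum_congr rfl
            intro e _
            simp only [h2 e, if_true, ite_true, mul_one, h1 e]
          · rw [if_neg hpi, if_neg hpj, if_neg hpk]
            have hip : i ≠ p := fun h => hpi h.symm
            have hjp : j ≠ p := fun h => hpj h.symm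
            have hkp : k ≠ p := fun h => hpk h.symm
            have h1 : ∀ e : Equiv.Perm (Fin n),
                ((Equiv.Perm.decomposeFin.symm (p, e)).symm i
                  < (Equiv.Perm.decomposeFin.symm (p, e)).symm j)
                ↔ (e.symm (dsc p i hip) < e.symm (dsc p j hjp)) := by
              intro e; rw [symm_eq p e hip, symm_eq p e hjp, Fin.succ_lt_succ_iff]
            have h2 : ∀ e : Equiv.Perm (Fin n),
                ((Equiv.Perm.decomposeFin.symm (p, e)).symm k
                  < (Equiv.Perm.decomposeFin.symm (p, e)).symm j)
                ↔ (e.symm (dsc p k hkp) < e.symm (dsc p j hjp)) := by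
              intro e; rw [symm_eq p e hkp, symm_eq p e hjp, Fin.succ_lt_succ_iff]
            have := ih (fun m => θ (Equiv.swap 0 p m.succ)) (dsc p i hip) (dsc p j hjp)
              (dsc p k hkp) (dsc_ne hip hjp hij) (dsc_ne hkp hjp hkj) (dsc_ne hkp hip hki)
            simp only [theta_dsc] at this
            rw [ht, ← this]
            apply Finset.sum_congr rfl
            intro e _
            simp only [h1 e, h2 e, mul_assoc]
    rw [Finset.sum_congr rfl (fun p _ => inner p)]
    have hEij : 0 < Real.exp (θ i) + Real.exp (θ j) := by positivity
    have hEkj : 0 < Real.exp (θ k) + Real.exp (θ j) := by positivity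
    have hEijk : 0 < Real.exp (θ i) + Real.exp (θ j) + Real.exp (θ k) := by positivity
    set c : Fin (n+1) → ℝ := fun p =>
      (if p = i then Real.exp (θ k) / (Real.exp (θ k) + Real.exp (θ j))
       else if p = j then 0
       else if p = k then Real.exp (θ i) / (Real.exp (θ i) + Real.exp (θ j))
       else t) with hc
    have key : (∑ p : Fin (n+1), Real.exp (θ p) * c p)
        = t * (∑ v : Fin (n+1), Real.exp (θ v)) := by
      rw [Finset.mul_sum, ← sub_eq_zero, ← Finset.sum_sub_distrib]
      have hvan : ∀ x ∈ Finset.univ, x ∉ ({i, j, k} : Finset (Fin (n+1))) →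
          Real.exp (θ x) * c x - t * Real.exp (θ x) = 0 := by
        intro x _ hx
        simp only [Finset.mem_insert, Finset.mem_singleton, not_or] at hx
        simp only [hc, if_neg hx.1, if_neg hx.2.1, if_neg hx.2.2, mul_comm, sub_self]
      rw [← Finset.sum_subset (Finset.subset_univ ({i, j, k} : Finset (Fin (n+1)))) hvan]
      have hjk : j ≠ k := Ne.symm hkj
      have hik : i ≠ k := Ne.symm hki
      have hinotin : i ∉ ({j, k} : Finset (Fin (n+1))) := by
        simp [hij, hik]
      have hjnotin : j ∉ ({k} : Finset (Fin (n+1))) := by simp [hjk]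
      rw [Finset.sum_insert hinotin, Finset.sum_insert hjnotin, Finset.sum_singleton]
      have ci : c i = Real.exp (θ k) / (Real.exp (θ k) + Real.exp (θ j)) := by
        simp [hc]
      have cj : c j = 0 := by
        simp [hc, Ne.symm hij]
      have ck : c k = Real.exp (θ i) / (Real.exp (θ i) + Real.exp (θ j)) := by
        simp [hc, hki, hkj]
      rw [ci, cj, ck, ht]
      unfold T2v
      field_simp
      ring
    calc ∑ p : Fin (n+1), Real.exp (θ p) / (∑ v : Fin (n+1), Real.exp (θ v)) * c p
        = (∑ p : Fin (n+1), Real.exp (θ p) * c p) / (∑ v : Fin (n+1), Real.exp (θ v)) := by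
          rw [Finset.sum_div]; apply Finset.sum_congr rfl; intro p _; ring
      _ = t := by rw [key, mul_div_assoc, div_self hW.ne', mul_one]

lemma ber_factor {n : ℕ} (f : Fin n → Fin n → Bool → ℝ) :
    ∑ g : Fin n → Fin n → Bool, ∏ i : Fin n, ∏ j : Fin n, f i j (g i j)
      = ∏ i : Fin n, ∏ j : Fin n, (f i j true + f i j false) := by
  have step : ∀ (m : ℕ) (h : Fin m → Bool → ℝ),
      ∑ g : Fin m → Bool, ∏ j : Fin m, h j (g j) = ∏ j : Fin m, (h j true + h j false) := by
    intro m h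
    rw [← Fintype.prod_sum (fun j (b : Bool) => h j b)]
    apply Finset.prod_congr rfl
    intro b _
    rw [Fintype.sum_bool]
  rw [← Fintype.prod_sum (fun i (gi : Fin n → Bool) => ∏ j, f i j (gi j))]
  apply Finset.prod_congr rfl
  intro i _
  exact step n (f i)

lemma ber_ind {n : ℕ} (p : Fin n → Fin n → ℝ) (S : Finset (Fin n × Fin n)) :
    ∑ g : Fin n → Fin n → Bool,
      (∏ i : Fin n, ∏ j : Fin n, (if g i j then p i j else 1 - p i j))
        * (∏ x ∈ S, (if g x.1 x.2 then (1:ℝ) else 0))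
      = ∏ x ∈ S, p x.1 x.2 := by
  have pairprod : ∀ (F : Fin n × Fin n → ℝ),
      (∏ i : Fin n, ∏ j : Fin n, F (i, j)) = ∏ x : Fin n × Fin n, F x := by
    intro F
    rw [← Finset.prod_product']
    rfl
  have key : ∀ g : Fin n → Fin n → Bool,
      (∏ i : Fin n, ∏ j : Fin n, (if g i j then p i j else 1 - p i j))
        * (∏ x ∈ S, (if g x.1 x.2 then (1:ℝ) else 0))
      = ∏ i : Fin n, ∏ j : Fin n,
          ((if g i j then p i j else 1 - p i j)
            * (if (i, j) ∈ S then (if g i j then (1:ℝ) else 0) else 1)) := by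
    intro g
    simp only [Finset.prod_mul_distrib]
    congr 1
    rw [pairprod (fun x => if x ∈ S then (if g x.1 x.2 then (1:ℝ) else 0) else 1),
      Finset.prod_ite_mem, Finset.univ_inter]
  simp only [key]
  rw [ber_factor (fun i j c => (if c then p i j else 1 - p i j)
      * (if (i, j) ∈ S then (if c then (1:ℝ) else 0) else 1))]
  have hr : (∏ x ∈ S, p x.1 x.2)
      = ∏ i : Fin n, ∏ j : Fin n, (if (i, j) ∈ S then p (i, j).1 (i, j).2 else 1) := by
    rw [pairprod (fun x => if x ∈ S then p x.1 x.2 else 1), Finset.prod_ite_mem,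
      Finset.univ_inter]
  rw [hr]
  apply Finset.prod_congr rfl; intro i _
  apply Finset.prod_congr rfl; intro j _
  by_cases h : (i, j) ∈ S <;> simp [h]

lemma moment1 {n : ℕ} (θ : Fin n → ℝ) (p : Fin n → Fin n → ℝ) {i j : Fin n} (hij : i ≠ j) :
    ∑ ω : Equiv.Perm (Fin n) × (Fin n → Fin n → Bool), bplProb θ p ω * bplEdge i j ω
      = bplEdgeExp θ p i j := by
  unfold bplEdgeExp
  rw [Fintype.sum_prod_type]
  have hsummand : ∀ (π : Equiv.Perm (Fin n)) (g : Fin n → Fin n → Bool),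
      bplProb θ p (π, g) * bplEdge i j (π, g)
      = (plackettLuce θ π * (if π.symm i < π.symm j then 1 else 0)) *
        ((∏ a : Fin n, ∏ b : Fin n, (if g a b then p a b else 1 - p a b))
          * ∏ x ∈ ({(i,j)} : Finset (Fin n × Fin n)), (if g x.1 x.2 then (1:ℝ) else 0)) := by
    intro π g
    simp only [bplProb, bplEdge, Finset.prod_singleton]
    by_cases h1 : g i j <;> by_cases h2 : π.symm i < π.symm j <;> simp [h1, h2] <;> ring
  simp only [hsummand]
  rw [← Finset.sum_mul_sum]
  rw [pl_pair θ i j hij, ber_ind p {(i,j)}, Finset.prod_singleton]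
  ring

lemma T2v_eq (a b c : ℝ) : T2v a b c
    = (Real.exp a / (Real.exp a + Real.exp b)) * (Real.exp c / (Real.exp c + Real.exp b))
      * (1 + Real.exp b / (Real.exp a + Real.exp b + Real.exp c)) := by
  unfold T2v
  have h1 : Real.exp a + Real.exp b ≠ 0 := by positivity
  have h2 : Real.exp c + Real.exp b ≠ 0 := by positivity
  have h3 : Real.exp a + Real.exp b + Real.exp c ≠ 0 := by positivity
  field_simp
  ring

lemma moment2 {n : ℕ} (θ : Fin n → ℝ) (p : Fin n → Fin n → ℝ) {i j k : Fin n}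
    (hij : i ≠ j) (hkj : k ≠ j) (hki : k ≠ i) :
    ∑ ω : Equiv.Perm (Fin n) × (Fin n → Fin n → Bool),
        bplProb θ p ω * (bplEdge i j ω * bplEdge k j ω)
      = p i j * p k j * T2v (θ i) (θ j) (θ k) := by
  rw [Fintype.sum_prod_type]
  have hne : ((i,j) : Fin n × Fin n) ≠ (k,j) := by
    intro h; exact hki (congrArg Prod.fst h).symm
  have hsummand : ∀ (π : Equiv.Perm (Fin n)) (g : Fin n → Fin n → Bool),
      bplProb θ p (π, g) * (bplEdge i j (π, g) * bplEdge k j (π, g))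
      = (plackettLuce θ π * (if π.symm i < π.symm j then 1 else 0)
            * (if π.symm k < π.symm j then 1 else 0)) *
        ((∏ a : Fin n, ∏ b : Fin n, (if g a b then p a b else 1 - p a b))
          * ∏ x ∈ ({(i,j),(k,j)} : Finset (Fin n × Fin n)), (if g x.1 x.2 then (1:ℝ) else 0)) := by
    intro π g
    rw [Finset.prod_insert (by simp [hne]), Finset.prod_singleton]
    simp only [bplProb, bplEdge]
    by_cases h1 : g i j <;> by_cases h2 : π.symm i < π.symm j <;>
      by_cases h3 : g k j <;> by_cases h4 : π.symm k < π.symm j <;>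
      simp [h1, h2, h3, h4] <;> ring
  simp only [hsummand]
  rw [← Finset.sum_mul_sum]
  rw [pl_triple θ i j k hij hkj hki, ber_ind p {(i,j),(k,j)},
    Finset.prod_insert (by simp [hne]), Finset.prod_singleton]
  ring

/-- The variance (over the randomness of the Bernoulli-Plackett-Luce model) of
`Σ_{i ≠ j} a_{ij} w_{ij} x_i` equals
`Σ_{i ≠ j} (w_{ij} x_i)² E[a_{ij}](1 − E[a_{ij}])
 + Σ_{i ≠ j} Σ_{k ≠ j, k ≠ i} (E[a_{ij}] w_{ij} x_i)(E[a_{kj}] w_{kj} x_k)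
   · e^{θ_j}/(e^{θ_i}+e^{θ_j}+e^{θ_k})`. -/
theorem bpl_variance_linear_combination {n : ℕ} (hn : 3 ≤ n) (θ : Fin n → ℝ)
    (p : Fin n → Fin n → ℝ) (hp : ∀ a b, 0 ≤ p a b ∧ p a b ≤ 1)
    (j : Fin n) (w x : Fin n → ℝ) :
    (∑ ω : Equiv.Perm (Fin n) × (Fin n → Fin n → Bool),
        bplProb θ p ω * (∑ i ∈ Finset.univ.erase j, bplEdge i j ω * w i * x i) ^ 2)
      - (∑ ω : Equiv.Perm (Fin n) × (Fin n → Fin n → Bool),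
          bplProb θ p ω * ∑ i ∈ Finset.univ.erase j, bplEdge i j ω * w i * x i) ^ 2
      = (∑ i ∈ Finset.univ.erase j,
            (w i * x i) ^ 2 * (bplEdgeExp θ p i j * (1 - bplEdgeExp θ p i j)))
        + ∑ i ∈ Finset.univ.erase j, ∑ k ∈ (Finset.univ.erase j).erase i,
            (bplEdgeExp θ p i j * w i * x i) * (bplEdgeExp θ p k j * w k * x k)
              * (Real.exp (θ j) / (Real.exp (θ i) + Real.exp (θ j) + Real.exp (θ k))) := by
  classical
  have hmem : ∀ i ∈ Finset.univ.erase j, i ≠ j := fun i hi => Finset.ne_of_mem_erase hi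
  have h1 : (∑ ω : Equiv.Perm (Fin n) × (Fin n → Fin n → Bool),
        bplProb θ p ω * ∑ i ∈ Finset.univ.erase j, bplEdge i j ω * w i * x i)
      = ∑ i ∈ Finset.univ.erase j, w i * x i * bplEdgeExp θ p i j := by
    calc (∑ ω : Equiv.Perm (Fin n) × (Fin n → Fin n → Bool),
          bplProb θ p ω * ∑ i ∈ Finset.univ.erase j, bplEdge i j ω * w i * x i)
        = ∑ ω : Equiv.Perm (Fin n) × (Fin n → Fin n → Bool),
            ∑ i ∈ Finset.univ.erase j, (w i * x i) * (bplProb θ p ω * bplEdge i j ω) := by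
          apply Finset.sum_congr rfl; intro ω _
          rw [Finset.mul_sum]
          apply Finset.sum_congr rfl; intro i _; ring
      _ = ∑ i ∈ Finset.univ.erase j, ∑ ω : Equiv.Perm (Fin n) × (Fin n → Fin n → Bool),
            (w i * x i) * (bplProb θ p ω * bplEdge i j ω) := Finset.sum_comm
      _ = ∑ i ∈ Finset.univ.erase j, w i * x i * bplEdgeExp θ p i j := by
          apply Finset.sum_congr rfl; intro i hi
          rw [← Finset.mul_sum, moment1 θ p (hmem i hi)]
  have h2 : (∑ ω : Equiv.Perm (Fin n) × (Fin n → Fin n → Bool),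
        bplProb θ p ω * (∑ i ∈ Finset.univ.erase j, bplEdge i j ω * w i * x i) ^ 2)
      = ∑ i ∈ Finset.univ.erase j, ∑ k ∈ Finset.univ.erase j,
          (w i * x i) * (w k * x k)
            * (∑ ω : Equiv.Perm (Fin n) × (Fin n → Fin n → Bool),
                bplProb θ p ω * (bplEdge i j ω * bplEdge k j ω)) := by
    calc (∑ ω : Equiv.Perm (Fin n) × (Fin n → Fin n → Bool),
          bplProb θ p ω * (∑ i ∈ Finset.univ.erase j, bplEdge i j ω * w i * x i) ^ 2)
        = ∑ ω : Equiv.Perm (Fin n) × (Fin n → Fin n → Bool),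
            ∑ i ∈ Finset.univ.erase j, ∑ k ∈ Finset.univ.erase j,
              (w i * x i) * (w k * x k) * (bplProb θ p ω * (bplEdge i j ω * bplEdge k j ω)) := by
          apply Finset.sum_congr rfl; intro ω _
          rw [sq, Finset.sum_mul_sum, Finset.mul_sum]
          apply Finset.sum_congr rfl; intro i _
          rw [Finset.mul_sum]
          apply Finset.sum_congr rfl; intro k _
          ring
      _ = ∑ i ∈ Finset.univ.erase j, ∑ ω : Equiv.Perm (Fin n) × (Fin n → Fin n → Bool),
            ∑ k ∈ Finset.univ.erase j,
              (w i * x i) * (w k * x k) * (bplProb θ p ω * (bplEdge i j ω * bplEdge k j ω)) :=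
          Finset.sum_comm
      _ = ∑ i ∈ Finset.univ.erase j, ∑ k ∈ Finset.univ.erase j,
            ∑ ω : Equiv.Perm (Fin n) × (Fin n → Fin n → Bool),
              (w i * x i) * (w k * x k) * (bplProb θ p ω * (bplEdge i j ω * bplEdge k j ω)) := by
          apply Finset.sum_congr rfl; intro i _
          exact Finset.sum_comm
      _ = _ := by
          apply Finset.sum_congr rfl; intro i _
          apply Finset.sum_congr rfl; intro k _
          rw [← Finset.mul_sum]
  rw [h1, h2, sq, Finset.sum_mul_sum, ← Finset.sum_sub_distrib]
  have inner : ∀ i ∈ Finset.univ.erase j,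
      ((∑ k ∈ Finset.univ.erase j,
          (w i * x i) * (w k * x k)
            * (∑ ω : Equiv.Perm (Fin n) × (Fin n → Fin n → Bool),
                bplProb θ p ω * (bplEdge i j ω * bplEdge k j ω)))
        - ∑ k ∈ Finset.univ.erase j,
            (w i * x i * bplEdgeExp θ p i j) * (w k * x k * bplEdgeExp θ p k j))
      = (w i * x i) ^ 2 * (bplEdgeExp θ p i j * (1 - bplEdgeExp θ p i j))
        + ∑ k ∈ (Finset.univ.erase j).erase i,
            (bplEdgeExp θ p i j * w i * x i) * (bplEdgeExp θ p k j * w k * x k)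
              * (Real.exp (θ j) / (Real.exp (θ i) + Real.exp (θ j) + Real.exp (θ k))) := by
    intro i hi
    rw [← Finset.sum_sub_distrib,
      ← Finset.add_sum_erase _ (fun k =>
        (w i * x i) * (w k * x k)
          * (∑ ω : Equiv.Perm (Fin n) × (Fin n → Fin n → Bool),
              bplProb θ p ω * (bplEdge i j ω * bplEdge k j ω))
        - (w i * x i * bplEdgeExp θ p i j) * (w k * x k * bplEdgeExp θ p k j)) hi]
    congr 1
    · have idem : ∀ ω : Equiv.Perm (Fin n) × (Fin n → Fin n → Bool),
          bplEdge i j ω * bplEdge i j ω = bplEdge i j ω := by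
        intro ω; unfold bplEdge; split_ifs <;> ring
      simp only [idem]
      rw [moment1 θ p (hmem i hi)]
      ring
    · apply Finset.sum_congr rfl
      intro k hk
      have hki : k ≠ i := Finset.ne_of_mem_erase hk
      have hkj : k ≠ j := hmem k (Finset.mem_of_mem_erase hk)
      rw [moment2 θ p (hmem i hi) hkj hki, T2v_eq]
      unfold bplEdgeExp
      ring
  rw [Finset.sum_congr rfl inner, Finset.sum_add_distrib]
end
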